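/- (Superminimal fibres give harmonic morphisms, k = 1.) Let U ⊆ ℝ^{2m} ≅ ℂ^m and V ⊆ ℂ be open, let M : V → so(m,ℂ) be holomorphic, and let z : U → V be a smooth map that is (M∘z)-holomorphic, i.e. ∂z/∂q̄^i + Σ_{j=1}^m M^j_{ī}(z(q)) ∂z/∂q^j = 0 for all i = 1,…,m. Then Δz = 0 on U; together with horizontal weak conformality this makes z a harmonic morphism. -/

import Mathlib

open Complex BigOperators Matrix

/-- Partial derivative in the direction of the real coordinate `x^{2j-1}`,
identifying `ℝ^{2m} ≅ ℂ^m` via `q^j = x^{2j-1} + i x^{2j}`. -/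
noncomputable def pdRe {m : ℕ} (f : (Fin m → ℂ) → ℂ) (j : Fin m) (x : Fin m → ℂ) : ℂ :=
  fderiv ℝ f x (Pi.single j 1)

/-- Partial derivative in the direction of the real coordinate `x^{2j}`. -/
noncomputable def pdIm {m : ℕ} (f : (Fin m → ℂ) → ℂ) (j : Fin m) (x : Fin m → ℂ) : ℂ :=
  fderiv ℝ f x (Pi.single j Complex.I)

/-- Wirtinger derivative `∂f/∂q^j = ½(∂f/∂x^{2j-1} − i ∂f/∂x^{2j})`. -/
noncomputable def wdq {m : ℕ} (f : (Fin m → ℂ) → ℂ) (j : Fin m) (x : Fin m → ℂ) : ℂ :=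
  (pdRe f j x - Complex.I * pdIm f j x) / 2

/-- Wirtinger derivative `∂f/∂q̄^j = ½(∂f/∂x^{2j-1} + i ∂f/∂x^{2j})`. -/
noncomputable def wdqbar {m : ℕ} (f : (Fin m → ℂ) → ℂ) (j : Fin m) (x : Fin m → ℂ) : ℂ :=
  (pdRe f j x + Complex.I * pdIm f j x) / 2

/-- Laplacian `Δf = Σ_{i=1}^{2m} ∂²f/(∂x^i)²`. -/
noncomputable def lap {m : ℕ} (f : (Fin m → ℂ) → ℂ) (x : Fin m → ℂ) : ℂ :=
  ∑ j, (pdRe (fun y => pdRe f j y) j x + pdIm (fun y => pdIm f j y) j x)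

/-- The horizontal weak conformality quantity `Σ_{i=1}^{2m} (∂f/∂x^i)²`. -/
noncomputable def hwc {m : ℕ} (f : (Fin m → ℂ) → ℂ) (x : Fin m → ℂ) : ℂ :=
  ∑ j, ((pdRe f j x) ^ 2 + (pdIm f j x) ^ 2)

/-!
With `∂ᵢ`, `∂̄ᵢ` the Wirtinger derivatives, `Σᵢ (∂z/∂xⁱ)² = 4 Σᵢ ∂ᵢz ∂̄ᵢz` and, by symmetry of
the second derivative, `Δz = 4 Σᵢ ∂ᵢ∂̄ᵢz`. Substituting `∂̄ᵢz = -Σⱼ Mʲᵢ ∂ⱼz` makes the first sum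
the contraction of the skew matrix `M` with the symmetric tensor `∂ᵢz ∂ⱼz`. Applying `∂ᵢ` to the
same relation, and using that `M` is holomorphic so that `∂ᵢ(M ∘ z) = M'(z) ∂ᵢz`, makes the second
sum a contraction of the skew matrices `M'(z)` and `M(z)` with the symmetric tensors `∂ᵢz ∂ⱼz` and
`∂ᵢ∂ⱼz`. Contractions of skew with symmetric tensors vanish.
-/

open Filter Topology

theorem sum_sum_mul_eq_zero_of_antisymm_of_symm {ι R : Type*} [Fintype ι] [CommRing R]
    [IsAddTorsionFree R] {N T : ι → ι → R} (hN : ∀ i j, N j i = -N i j)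
    (hT : ∀ i j, T j i = T i j) : ∑ i, ∑ j, N i j * T i j = 0 := by
  refine self_eq_neg.mp ?_
  calc ∑ i, ∑ j, N i j * T i j = ∑ i, ∑ j, N j i * T j i := Finset.sum_comm
    _ = -∑ i, ∑ j, N i j * T i j := by
      simp only [← Finset.sum_neg_distrib, ← neg_mul]
      exact Finset.sum_congr rfl fun i _ => Finset.sum_congr rfl fun j _ => by rw [hN, hT]

section Wirtinger

variable {m : ℕ} {f g : (Fin m → ℂ) → ℂ} {x : Fin m → ℂ} {L : (Fin m → ℂ) →L[ℝ] ℂ}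

theorem HasFDerivAt.wdq_eq (h : HasFDerivAt f L x) (j : Fin m) :
    wdq f j x = (L (Pi.single j 1) - I * L (Pi.single j I)) / 2 := by
  rw [wdq, pdRe, pdIm, h.fderiv]

theorem Filter.EventuallyEq.wdq_eq (h : f =ᶠ[𝓝 x] g) (j : Fin m) : wdq f j x = wdq g j x := by
  simp only [wdq, pdRe, pdIm, h.fderiv_eq]

theorem wdq_add (hf : DifferentiableAt ℝ f x) (hg : DifferentiableAt ℝ g x) (j : Fin m) :
    wdq (fun y => f y + g y) j x = wdq f j x + wdq g j x := by
  rw [(hf.hasFDerivAt.fun_add hg.hasFDerivAt).wdq_eq, hf.hasFDerivAt.wdq_eq, hg.hasFDerivAt.wdq_eq]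
  simp only [_root_.add_apply]
  ring

theorem wdq_sum {ι : Type*} (s : Finset ι) {A : ι → (Fin m → ℂ) → ℂ}
    (hA : ∀ i ∈ s, DifferentiableAt ℝ (A i) x) (j : Fin m) :
    wdq (fun y => ∑ i ∈ s, A i y) j x = ∑ i ∈ s, wdq (A i) j x := by
  rw [(HasFDerivAt.fun_sum fun i hi => (hA i hi).hasFDerivAt).wdq_eq]
  rw [Finset.sum_congr rfl fun i hi => (hA i hi).hasFDerivAt.wdq_eq j]
  simp only [_root_.sum_apply, Finset.mul_sum, ← Finset.sum_sub_distrib, Finset.sum_div]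

theorem wdq_mul (hf : DifferentiableAt ℝ f x) (hg : DifferentiableAt ℝ g x) (j : Fin m) :
    wdq (fun y => f y * g y) j x = wdq f j x * g x + f x * wdq g j x := by
  rw [(hf.hasFDerivAt.fun_mul hg.hasFDerivAt).wdq_eq, hf.hasFDerivAt.wdq_eq, hg.hasFDerivAt.wdq_eq]
  simp only [_root_.add_apply, _root_.smul_apply, smul_eq_mul]
  ring

theorem wdq_comp {h : ℂ → ℂ} (hh : DifferentiableAt ℂ h (f x)) (hf : DifferentiableAt ℝ f x)
    (j : Fin m) : wdq (fun y => h (f y)) j x = deriv h (f x) * wdq f j x := by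
  rw [HasFDerivAt.wdq_eq (f := fun y => h (f y))
    (hh.hasDerivAt.comp_hasFDerivAt x hf.hasFDerivAt), hf.hasFDerivAt.wdq_eq]
  simp only [_root_.smul_apply, smul_eq_mul]
  ring

end Wirtinger

section SecondOrder

variable {m : ℕ} {f : (Fin m → ℂ) → ℂ} {x : Fin m → ℂ}

theorem hasFDerivAt_fderiv_apply (hf : DifferentiableAt ℝ (fderiv ℝ f) x) (v : Fin m → ℂ) :
    HasFDerivAt (fun y => fderiv ℝ f y v) ((fderiv ℝ (fderiv ℝ f) x).flip v) x := by
  simpa using hf.hasFDerivAt.clm_apply (hasFDerivAt_const v x)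

theorem hasFDerivAt_wdq (hf : DifferentiableAt ℝ (fderiv ℝ f) x) (j : Fin m) :
    HasFDerivAt (wdq f j) ((2 : ℂ)⁻¹ • ((fderiv ℝ (fderiv ℝ f) x).flip (Pi.single j 1)
      - I • (fderiv ℝ (fderiv ℝ f) x).flip (Pi.single j I))) x := by
  refine (((hasFDerivAt_fderiv_apply hf _).fun_sub
    ((hasFDerivAt_fderiv_apply hf _).const_smul I)).const_smul (2 : ℂ)⁻¹).congr_of_eventuallyEq
    (Eventually.of_forall fun y => ?_)
  simp [wdq, pdRe, pdIm, div_eq_inv_mul]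

theorem hasFDerivAt_wdqbar (hf : DifferentiableAt ℝ (fderiv ℝ f) x) (j : Fin m) :
    HasFDerivAt (wdqbar f j) ((2 : ℂ)⁻¹ • ((fderiv ℝ (fderiv ℝ f) x).flip (Pi.single j 1)
      + I • (fderiv ℝ (fderiv ℝ f) x).flip (Pi.single j I))) x := by
  refine (((hasFDerivAt_fderiv_apply hf _).fun_add
    ((hasFDerivAt_fderiv_apply hf _).const_smul I)).const_smul (2 : ℂ)⁻¹).congr_of_eventuallyEq
    (Eventually.of_forall fun y => ?_)
  simp [wdqbar, pdRe, pdIm, div_eq_inv_mul]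

theorem ContDiffAt.differentiableAt_fderiv (hf : ContDiffAt ℝ 2 f x) :
    DifferentiableAt ℝ (fderiv ℝ f) x :=
  (hf.fderiv_right (m := 1) (by norm_num)).differentiableAt one_ne_zero

theorem wdq_wdq_comm (hf : ContDiffAt ℝ 2 f x) (i j : Fin m) :
    wdq (wdq f j) i x = wdq (wdq f i) j x := by
  have hsymm := hf.isSymmSndFDerivAt (by simp)
  rw [(hasFDerivAt_wdq hf.differentiableAt_fderiv j).wdq_eq,
    (hasFDerivAt_wdq hf.differentiableAt_fderiv i).wdq_eq]
  simp only [_root_.smul_apply, _root_.sub_apply, ContinuousLinearMap.flip_apply, smul_eq_mul,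
    hsymm.eq (Pi.single i _) (Pi.single j _)]
  ring

theorem lap_eq_four_mul_sum_wdq_wdqbar (hf : ContDiffAt ℝ 2 f x) :
    lap f x = 4 * ∑ j, wdq (wdqbar f j) j x := by
  have hsymm := hf.isSymmSndFDerivAt (by simp)
  rw [lap, Finset.mul_sum]
  refine Finset.sum_congr rfl fun j _ => ?_
  rw [(hasFDerivAt_wdqbar hf.differentiableAt_fderiv j).wdq_eq]
  simp only [pdRe, pdIm]
  rw [(hasFDerivAt_fderiv_apply hf.differentiableAt_fderiv _).fderiv,
    (hasFDerivAt_fderiv_apply hf.differentiableAt_fderiv _).fderiv]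
  simp only [_root_.add_apply, _root_.smul_apply, ContinuousLinearMap.flip_apply, smul_eq_mul,
    hsymm.eq (Pi.single j 1) (Pi.single j I)]
  linear_combination fderiv ℝ (fderiv ℝ f) x (Pi.single j I) (Pi.single j I) * I_sq

end SecondOrder

section Holomorphic

variable {m : ℕ} {f : (Fin m → ℂ) → ℂ} {x : Fin m → ℂ}

theorem hwc_eq_four_mul_sum_wdq_mul_wdqbar :
    hwc f x = 4 * ∑ j, wdq f j x * wdqbar f j x := by
  rw [hwc, Finset.mul_sum]
  refine Finset.sum_congr rfl fun j _ => ?_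
  rw [wdq, wdqbar]
  linear_combination pdIm f j x ^ 2 * I_sq

theorem hwc_eq_zero_of_wdqbar_eq (N : Matrix (Fin m) (Fin m) ℂ) (hN : Nᵀ = -N)
    (h : ∀ i, wdqbar f i x + ∑ j, N j i * wdq f j x = 0) : hwc f x = 0 := by
  have hN' : ∀ i j, N j i = -N i j := fun i j => by simpa using congrFun₂ hN i j
  have hwdqbar : ∀ i, wdqbar f i x = -∑ j, N j i * wdq f j x :=
    fun i => eq_neg_of_add_eq_zero_left (h i)
  calc hwc f x = 4 * ∑ i, wdq f i x * wdqbar f i x := hwc_eq_four_mul_sum_wdq_mul_wdqbar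
    _ = ∑ i, ∑ j, (-4 * N j i) * (wdq f i x * wdq f j x) := by
      simp only [hwdqbar, Finset.mul_sum, mul_neg, ← Finset.sum_neg_distrib]
      exact Finset.sum_congr rfl fun i _ => Finset.sum_congr rfl fun j _ => by ring
    _ = 0 := sum_sum_mul_eq_zero_of_antisymm_of_symm (fun i j => by rw [hN']; ring)
      fun i j => mul_comm _ _

theorem sum_wdq_wdqbar_eq_zero (M : ℂ → Matrix (Fin m) (Fin m) ℂ) (hf : ContDiffAt ℝ 2 f x)
    (hM : ∀ i j, DifferentiableAt ℂ (fun w => M w i j) (f x))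
    (hskew : ∀ᶠ w in 𝓝 (f x), (M w)ᵀ = -M w)
    (hhol : ∀ᶠ y in 𝓝 x, ∀ i, wdqbar f i y + ∑ j, M (f y) j i * wdq f j y = 0) :
    ∑ i, wdq (wdqbar f i) i x = 0 := by
  have hskew' : ∀ᶠ w in 𝓝 (f x), ∀ i j, M w j i = -M w i j :=
    hskew.mono fun w hw i j => by simpa using congrFun₂ hw i j
  have hderiv_skew : ∀ i j, deriv (fun w => M w j i) (f x) = -deriv (fun w => M w i j) (f x) :=
    fun i j => by
      have h : (fun w => M w j i) =ᶠ[𝓝 (f x)] fun w => -M w i j := hskew'.mono fun w hw => hw i j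
      rw [h.deriv_eq, deriv.fun_neg]
  have hfd : DifferentiableAt ℝ f x := hf.differentiableAt two_ne_zero
  have hwdq : ∀ j, DifferentiableAt ℝ (wdq f j) x := fun j =>
    (hasFDerivAt_wdq hf.differentiableAt_fderiv j).differentiableAt
  have hwdqbar : ∀ j, DifferentiableAt ℝ (wdqbar f j) x := fun j =>
    (hasFDerivAt_wdqbar hf.differentiableAt_fderiv j).differentiableAt
  have hMf : ∀ i j, DifferentiableAt ℝ (fun y => M (f y) j i) x := fun i j =>
    ((hM j i).restrictScalars ℝ).comp x hfd
  have key : ∀ i, wdq (wdqbar f i) i x = -∑ j, (deriv (fun w => M w j i) (f x)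
      * (wdq f i x * wdq f j x) + M (f x) j i * wdq (wdq f j) i x) := by
    intro i
    have h0 : wdq (fun y => wdqbar f i y + ∑ j, M (f y) j i * wdq f j y) i x = 0 := by
      have h : (fun y => wdqbar f i y + ∑ j, M (f y) j i * wdq f j y) =ᶠ[𝓝 x] fun _ => 0 :=
        hhol.mono fun y hy => hy i
      rw [h.wdq_eq]
      simp [wdq, pdRe, pdIm]
    rw [wdq_add (hwdqbar i) (DifferentiableAt.fun_sum fun j _ => (hMf i j).fun_mul (hwdq j)),
      wdq_sum _ fun j _ => (hMf i j).fun_mul (hwdq j)] at h0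
    simp only [wdq_mul (hMf i _) (hwdq _), wdq_comp (hM _ i) hfd, mul_assoc] at h0
    exact eq_neg_of_add_eq_zero_left h0
  rw [Finset.sum_congr rfl fun i _ => key i]
  simp only [Finset.sum_neg_distrib, Finset.sum_add_distrib]
  rw [sum_sum_mul_eq_zero_of_antisymm_of_symm (fun i j => hderiv_skew j i) fun i j => mul_comm _ _,
    sum_sum_mul_eq_zero_of_antisymm_of_symm (fun i j => hskew'.self_of_nhds j i)
      fun i j => wdq_wdq_comm hf j i]
  simp

end Holomorphic

/-- superminimal fibres give harmonic morphisms, `k = 1`: if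
`z : U → V ⊆ ℂ` is `(M∘z)`-holomorphic with `M : V → so(m,ℂ)` holomorphic, then
`Δz = 0` on `U`; together with horizontal weak conformality (`Σ_i (∂z/∂x^i)² = 0`)
this makes `z` a harmonic morphism. -/
theorem harmonic_morphism_k_one {m : ℕ}
    (U : Set (Fin m → ℂ)) (hU : IsOpen U)
    (V : Set ℂ) (hV : IsOpen V)
    (M : ℂ → Matrix (Fin m) (Fin m) ℂ)
    (hskew : ∀ v ∈ V, (M v)ᵀ = -(M v))
    (hM : ∀ i j, DifferentiableOn ℂ (fun w => M w i j) V)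
    (z : (Fin m → ℂ) → ℂ) (hz : ContDiffOn ℝ (⊤ : ℕ∞) z U)
    (hzV : Set.MapsTo z U V)
    (hhol : ∀ q ∈ U, ∀ i, wdqbar z i q + ∑ j, M (z q) j i * wdq z j q = 0) :
    ∀ q ∈ U, lap z q = 0 ∧ hwc z q = 0 := by
  intro q hq
  have hzq : ContDiffAt ℝ 2 z q :=
    (hz.contDiffAt (hU.mem_nhds hq)).of_le (WithTop.coe_le_coe.mpr le_top)
  have hVq : V ∈ 𝓝 (z q) := hV.mem_nhds (hzV hq)
  refine ⟨?_, hwc_eq_zero_of_wdqbar_eq (M (z q)) (hskew _ (hzV hq)) (hhol q hq)⟩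
  rw [lap_eq_four_mul_sum_wdq_wdqbar hzq,
    sum_wdq_wdqbar_eq_zero M hzq (fun i j => (hM i j).differentiableAt hVq)
      (eventually_of_mem hVq hskew) (eventually_of_mem (hU.mem_nhds hq) hhol), mul_zero]
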